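/- arXiv:quant-ph/0507075 — 4 statements merged into one kernel-verified Lean document; each statement's English description precedes it below -/
import Mathlib

section
/- Let ℰ be a quantum operation on operators of a finite-dimensional Hilbert space H such that ℰ(|φ⟩⟨φ|) = ρ for all unit vectors |φ⟩ ∈ H. Then for every density matrix σ on K ⊗ H (K a finite-dimensional Hilbert space), (I ⊗ ℰ)(σ) = (Tr_H σ) ⊗ ρ. -/
open Matrix BigOperators ComplexOrder

noncomputable section

/-- Outer product |v⟩⟨w| of two vectors. -/
def outer {n : Type*} [Fintype n] (v w : n → ℂ) : Matrix n n ℂ :=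
  Matrix.of fun i j => v i * star (w j)

/-- A linear map on matrices is trace preserving. -/
def TracePreserving {n m : Type*} [Fintype n] [Fintype m]
    (ℰ : Matrix n n ℂ →ₗ[ℂ] Matrix m m ℂ) : Prop :=
  ∀ ρ : Matrix n n ℂ, (ℰ ρ).trace = ρ.trace

/-- A linear map on matrices is completely positive: all ancilla extensions
preserve positive semidefiniteness. -/
def CompletelyPositive {n m : Type*} [Fintype n] [DecidableEq n] [Fintype m] [DecidableEq m]
    (ℰ : Matrix n n ℂ →ₗ[ℂ] Matrix m m ℂ) : Prop :=
  ∀ (k : ℕ) (σ : Matrix (Fin k × n) (Fin k × n) ℂ), σ.PosSemidef →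
    (Matrix.of fun p q : Fin k × m =>
      ℰ (Matrix.of fun a b => σ (p.1, a) (q.1, b)) p.2 q.2).PosSemidef


open Kronecker

/-- The extension I ⊗ ℰ of a map on operators of `H` acting on operators of `K ⊗ H`. -/
def idTensor {K H M : Type*} [Fintype K] [Fintype H] [Fintype M]
    (ℰ : Matrix H H ℂ →ₗ[ℂ] Matrix M M ℂ)
    (σ : Matrix (K × H) (K × H) ℂ) : Matrix (K × M) (K × M) ℂ :=
  Matrix.of fun p q => ℰ (Matrix.of fun a b => σ (p.1, a) (q.1, b)) p.2 q.2

/-- Partial trace over the second (H) factor. -/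
def ptraceRight {K H : Type*} [Fintype K] [Fintype H]
    (σ : Matrix (K × H) (K × H) ℂ) : Matrix K K ℂ :=
  Matrix.of fun k k' => ∑ h, σ (k, h) (k', h)

set_option linter.unusedSectionVars false

section Aux

variable {H M : Type*} [Fintype H] [DecidableEq H] [Fintype M] [DecidableEq M]
variable (ℰ : Matrix H H ℂ →ₗ[ℂ] Matrix M M ℂ) (ρ : Matrix M M ℂ)

lemma lemA (hconst : ∀ φ : H → ℂ, (∑ i, Complex.normSq (φ i)) = 1 → ℰ (outer φ φ) = ρ)
    (u : H → ℂ) :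
    ℰ (outer u u) = ((∑ i, Complex.normSq (u i) : ℝ) : ℂ) • ρ := by
  by_cases h : (∑ i, Complex.normSq (u i)) = 0
  · have hu : u = 0 := by
      funext i
      have := (Finset.sum_eq_zero_iff_of_nonneg
        (fun i _ => Complex.normSq_nonneg (u i))).mp h i (Finset.mem_univ i)
      exact Complex.normSq_eq_zero.mp this
    have h0 : outer u u = 0 := by
      ext i j; simp [outer, hu]
    simp [h0, h]
  · set s : ℝ := ∑ i, Complex.normSq (u i) with hs
    have hs0 : 0 < s := lt_of_le_of_ne (Finset.sum_nonneg fun i _ => Complex.normSq_nonneg _)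
      (Ne.symm h)
    set t : ℝ := Real.sqrt s with ht
    have htt : t * t = s := Real.mul_self_sqrt hs0.le
    have ht0 : t ≠ 0 := by positivity
    have htC : (t : ℂ) ≠ 0 := by exact_mod_cast ht0
    have hst : (s : ℂ) = (t : ℂ) * (t : ℂ) := by exact_mod_cast htt.symm
    set φ : H → ℂ := fun i => (↑t)⁻¹ * u i with hφ
    have hφ1 : (∑ i, Complex.normSq (φ i)) = 1 := by
      have : ∀ i, Complex.normSq (φ i) = t⁻¹ * t⁻¹ * Complex.normSq (u i) := by
        intro i
        simp [hφ, Complex.normSq_mul, ← Complex.ofReal_inv, Complex.normSq_ofReal]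
      rw [Finset.sum_congr rfl fun i _ => this i, ← Finset.mul_sum, ← hs]
      field_simp
      linarith [htt]
    have houter : outer u u = (s : ℂ) • outer φ φ := by
      ext i j
      simp only [outer, Matrix.smul_apply, Matrix.of_apply, hφ, smul_eq_mul,
        star_mul', Complex.star_def, Complex.conj_ofReal, map_inv₀]
      rw [hst]
      field_simp
    rw [houter, _root_.map_smul, hconst φ hφ1]


lemma lemB (hconst : ∀ φ : H → ℂ, (∑ i, Complex.normSq (φ i)) = 1 → ℰ (outer φ φ) = ρ)
    (v w : H → ℂ) :
    ℰ (outer v w) = (∑ i, v i * star (w i)) • ρ := by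
  have polar : outer v w = (4⁻¹ : ℂ) • (outer (v + w) (v + w) - outer (v - w) (v - w)
      + Complex.I • outer (v + Complex.I • w) (v + Complex.I • w)
      - Complex.I • outer (v - Complex.I • w) (v - Complex.I • w)) := by
    ext i j
    simp only [outer, Matrix.smul_apply, Matrix.sub_apply, Matrix.add_apply, Matrix.of_apply,
      Pi.add_apply, Pi.sub_apply, Pi.smul_apply, smul_eq_mul, star_add, star_sub, star_mul',
      Complex.star_def, Complex.conj_I]
    linear_combination ((v i * (starRingEnd ℂ) (w j) - w i * (starRingEnd ℂ) (v j)) / 2) *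
      Complex.I_sq
  rw [polar, _root_.map_smul, map_sub, _root_.map_add, map_sub, _root_.map_smul,
    _root_.map_smul, lemA ℰ ρ hconst, lemA ℰ ρ hconst, lemA ℰ ρ hconst, lemA ℰ ρ hconst,
    smul_smul, smul_smul, ← sub_smul, ← add_smul, ← sub_smul, ← smul_assoc, smul_eq_mul]
  congr 1
  push_cast
  simp only [← Complex.mul_conj, Finset.mul_sum, ← Finset.sum_sub_distrib,
    ← Finset.sum_add_distrib]
  refine Finset.sum_congr rfl fun i _ => ?_
  simp only [Pi.add_apply, Pi.sub_apply, Pi.smul_apply, smul_eq_mul, map_add, map_sub, _root_.map_mul,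
    Complex.star_def, Complex.conj_I]
  linear_combination ((w i * (starRingEnd ℂ) (v i) - v i * (starRingEnd ℂ) (w i)) / 2) *
    Complex.I_sq


lemma lemKey (hconst : ∀ φ : H → ℂ, (∑ i, Complex.normSq (φ i)) = 1 → ℰ (outer φ φ) = ρ)
    (A : Matrix H H ℂ) :
    ℰ A = A.trace • ρ := by
  have hA : A = ∑ i, ∑ j, A i j • outer (Pi.single i (1:ℂ)) (Pi.single j (1:ℂ)) := by
    ext a b
    simp [outer, Matrix.sum_apply, Pi.single_apply, apply_ite, mul_ite, ite_and]
  rw [hA]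
  rw [map_sum]
  simp only [map_sum, _root_.map_smul, lemB ℰ ρ hconst]
  have hs : ∀ i j : H, (∑ k, Pi.single i (1:ℂ) k * star (Pi.single j (1:ℂ) k))
      = (if j = i then (1:ℂ) else 0) := by
    intro i j
    simp [Pi.single_apply, apply_ite, mul_ite, ite_and]
  simp only [hs]
  rw [Finset.sum_congr rfl fun i _ => Finset.sum_congr rfl fun j _ => rfl]
  have : ∀ i : H, (∑ j, A i j • ((if (j = i) then (1:ℂ) else 0) • ρ)) = A i i • ρ := by
    intro i
    rw [Finset.sum_eq_single i]
    · simp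
    · intro j _ hj; simp [hj]
    · simp
  simp only [this, ← Finset.sum_smul]
  rw [← hA]
  rfl

end Aux

/-- If a quantum operation sends every pure state of H to the same state ρ, then for
every density matrix σ on K ⊗ H, (I ⊗ ℰ)(σ) = (Tr_H σ) ⊗ ρ. -/
theorem idTensor_constant_channel
    {K H M : Type*} [Fintype K] [DecidableEq K] [Fintype H] [DecidableEq H]
    [Fintype M] [DecidableEq M]
    (ℰ : Matrix H H ℂ →ₗ[ℂ] Matrix M M ℂ)
    (hCP : CompletelyPositive ℰ) (hTP : TracePreserving ℰ)
    (ρ : Matrix M M ℂ) (hρ : ρ.PosSemidef) (hρtr : ρ.trace = 1)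
    (hconst : ∀ φ : H → ℂ, (∑ i, Complex.normSq (φ i)) = 1 → ℰ (outer φ φ) = ρ)
    (σ : Matrix (K × H) (K × H) ℂ) (hσ : σ.PosSemidef) (hσtr : σ.trace = 1) :
    idTensor ℰ σ = (ptraceRight σ) ⊗ₖ ρ := by
  ext ⟨k, m⟩ ⟨k', m'⟩
  simp only [idTensor, Matrix.of_apply, lemKey ℰ ρ hconst, Matrix.smul_apply, smul_eq_mul,
    Matrix.kroneckerMap_apply, ptraceRight, Matrix.trace, Matrix.diag]
end
end

section
/- Let ℰ be a quantum operation on operators of H with ℰ(|φ⟩⟨φ|) = ρ for all unit |φ⟩ ∈ H. Then for any unit vector |ψ⟩ ∈ K ⊗ H with Schmidt decomposition |ψ⟩ = Σ_i √λ_i |a_i⟩⊗|b_i⟩, we have (I ⊗ ℰ)(|ψ⟩⟨ψ|) = (Σ_i λ_i |a_i⟩⟨a_i|) ⊗ ρ. -/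
open Matrix BigOperators ComplexOrder

noncomputable section

open Kronecker

lemma outer_expand {n : Type*} [Fintype n] (c : ℂ) (hc : star c * c = 1) (v w : n → ℂ) :
    outer (fun h => ((Real.sqrt 2 : ℝ) : ℂ)⁻¹ * (v h + c * w h))
          (fun h => ((Real.sqrt 2 : ℝ) : ℂ)⁻¹ * (v h + c * w h))
    = (2 : ℂ)⁻¹ • (outer v v + star c • outer v w + c • outer w v + outer w w) := by
  have h2 : (((Real.sqrt 2 : ℝ) : ℂ))⁻¹ * (star (((Real.sqrt 2 : ℝ) : ℂ))⁻¹) = (2 : ℂ)⁻¹ := by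
    have hs : ((Real.sqrt 2 : ℝ) : ℂ) * ((Real.sqrt 2 : ℝ) : ℂ) = 2 := by
      norm_cast
      exact Real.mul_self_sqrt (by norm_num)
    rw [star_inv₀,
      show star ((Real.sqrt 2 : ℝ) : ℂ) = ((Real.sqrt 2 : ℝ) : ℂ) from Complex.conj_ofReal _,
      ← mul_inv, hs]
  ext p q
  simp only [outer, Matrix.smul_apply, Matrix.add_apply, Matrix.of_apply, smul_eq_mul,
    star_mul', star_add, StarMul.star_mul]
  have hcc : c * star c = 1 := by rw [mul_comm]; exact hc
  calc ((Real.sqrt 2 : ℝ) : ℂ)⁻¹ * (v p + c * w p) * (star (((Real.sqrt 2 : ℝ) : ℂ))⁻¹ * (star (v q) + star c * star (w q)))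
      = (((Real.sqrt 2 : ℝ) : ℂ)⁻¹ * (star (((Real.sqrt 2 : ℝ) : ℂ))⁻¹)) * ((v p + c * w p) * (star (v q) + star c * star (w q))) := by ring
    _ = (2:ℂ)⁻¹ * (v p * star (v q) + star c * (v p * star (w q)) + c * (w p * star (v q)) + (c * star c) * (w p * star (w q))) := by rw [h2]; ring
    _ = _ := by rw [hcc]; ring

lemma channel_outer {H M ι : Type*} [Fintype H] [Fintype M] [Fintype ι] [DecidableEq ι]
    (ℰ : Matrix H H ℂ →ₗ[ℂ] Matrix M M ℂ) (ρ : Matrix M M ℂ)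
    (hconst : ∀ φ : H → ℂ, (∑ i, Complex.normSq (φ i)) = 1 → ℰ (outer φ φ) = ρ)
    (b : ι → H → ℂ)
    (hb : ∀ i j, (∑ h, star (b i h) * b j h) = if i = j then 1 else 0)
    (i j : ι) : ℰ (outer (b i) (b j)) = if i = j then ρ else 0 := by
  -- norm-one of basis vectors
  have hnorm : ∀ k, (∑ h, Complex.normSq (b k h)) = 1 := by
    intro k
    have := hb k k
    simp at this
    have h2 : ((∑ h, Complex.normSq (b k h) : ℝ) : ℂ) = 1 := by
      push_cast
      rw [← this]
      refine Finset.sum_congr rfl fun h _ => ?_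
      rw [mul_comm, Complex.mul_conj]
    exact_mod_cast h2
  have hdiag : ∀ k, ℰ (outer (b k) (b k)) = ρ := fun k => hconst _ (hnorm k)
  by_cases hij : i = j
  · subst hij; simp [hdiag]
  · simp only [if_neg hij]
    -- the combined vector (b i + c b j)/√2 is a unit vector for |c| = 1
    have hunit : ∀ c : ℂ, star c * c = 1 →
        (∑ h, Complex.normSq (((Real.sqrt 2 : ℝ) : ℂ)⁻¹ * (b i h + c * b j h))) = 1 := by
      intro c hc
      have key : ((∑ h, Complex.normSq (((Real.sqrt 2 : ℝ) : ℂ)⁻¹ * (b i h + c * b j h)) : ℝ) : ℂ) = 1 := by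
        push_cast
        have expand : ∀ h : H,
            (Complex.normSq (((Real.sqrt 2 : ℝ) : ℂ)⁻¹ * (b i h + c * b j h)) : ℂ)
            = (2:ℂ)⁻¹ * (star (b i h) * b i h + c * (star (b i h) * b j h)
                + star c * (star (b j h) * b i h) + (star c * c) * (star (b j h) * b j h)) := by
          intro h
          rw [show ((Complex.normSq ((((Real.sqrt 2 : ℝ) : ℂ))⁻¹ * (b i h + c * b j h)) : ℝ) : ℂ)
              = ((((Real.sqrt 2 : ℝ) : ℂ))⁻¹ * (b i h + c * b j h))
                * star ((((Real.sqrt 2 : ℝ) : ℂ))⁻¹ * (b i h + c * b j h))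
            from (Complex.mul_conj _).symm]
          have hs : star (((Real.sqrt 2 : ℝ) : ℂ)⁻¹) * ((Real.sqrt 2 : ℝ) : ℂ)⁻¹ = (2:ℂ)⁻¹ := by
            have hs2 : ((Real.sqrt 2 : ℝ) : ℂ) * ((Real.sqrt 2 : ℝ) : ℂ) = 2 := by
              norm_cast; exact Real.mul_self_sqrt (by norm_num)
            rw [star_inv₀,
              show star ((Real.sqrt 2 : ℝ) : ℂ) = ((Real.sqrt 2 : ℝ) : ℂ) from Complex.conj_ofReal _,
              ← mul_inv, hs2]
          simp only [star_add, StarMul.star_mul]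
          linear_combination (star (b i h) * b i h + c * (star (b i h) * b j h)
            + star c * (star (b j h) * b i h) + star c * c * (star (b j h) * b j h)) * hs
        rw [Finset.sum_congr rfl (fun h _ => expand h), ← Finset.mul_sum]
        have : (∑ h, (star (b i h) * b i h + c * (star (b i h) * b j h)
                + star c * (star (b j h) * b i h) + (star c * c) * (star (b j h) * b j h))) = 2 := by
          simp only [Finset.sum_add_distrib, ← Finset.mul_sum, hb, if_pos rfl, if_neg hij,
            if_neg (Ne.symm hij), hc, eq_self_iff_true, if_true]
          ring
        rw [this]; norm_num
      exact_mod_cast key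
    have hkey : ∀ c : ℂ, star c * c = 1 →
        star c • ℰ (outer (b i) (b j)) + c • ℰ (outer (b j) (b i)) = 0 := by
      intro c hc
      have h1 := hconst _ (hunit c hc)
      rw [outer_expand c hc] at h1
      simp only [map_add, _root_.map_smul] at h1
      rw [hdiag i, hdiag j] at h1
      have h2 : ρ + star c • ℰ (outer (b i) (b j)) + c • ℰ (outer (b j) (b i)) + ρ
          = (2:ℂ) • ρ := by
        have h2' := congrArg (fun X => (2:ℂ) • X) h1
        simp only [smul_smul] at h2'
        norm_num at h2'
        exact h2'
      calc star c • ℰ (outer (b i) (b j)) + c • ℰ (outer (b j) (b i))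
          = (ρ + star c • ℰ (outer (b i) (b j)) + c • ℰ (outer (b j) (b i)) + ρ) - (2:ℂ) • ρ := by
            module
        _ = 0 := by rw [h2, sub_self]
    have e1 := hkey 1 (by norm_num)
    have eI := hkey Complex.I (by simp [Complex.ext_iff])
    simp only [star_one, one_smul] at e1
    rw [show star Complex.I = -Complex.I from Complex.conj_I] at eI
    -- e1 : E_ij + E_ji = 0, eI : -I • E_ij + I • E_ji = 0
    have h4 : Complex.I • (ℰ (outer (b i) (b j)) + ℰ (outer (b j) (b i)))
        + (-Complex.I • ℰ (outer (b i) (b j)) + Complex.I • ℰ (outer (b j) (b i))) 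
        = (2 * Complex.I) • ℰ (outer (b j) (b i)) := by module
    rw [e1, eI, smul_zero, add_zero] at h4
    have h5 : ℰ (outer (b j) (b i)) = 0 := by
      have := congrArg (fun X => ((2 * Complex.I)⁻¹ : ℂ) • X) h4.symm
      simpa [smul_smul, inv_mul_cancel₀ (by simp [Complex.ext_iff] : (2 * Complex.I : ℂ) ≠ 0)] using this
    rw [h5, add_zero] at e1
    exact e1


/-- If a quantum operation sends every pure state of H to ρ, then for a unit vector
ψ ∈ K ⊗ H with Schmidt decomposition ψ = Σ_i √λ_i a_i ⊗ b_i,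
(I ⊗ ℰ)(|ψ⟩⟨ψ|) = (Σ_i λ_i |a_i⟩⟨a_i|) ⊗ ρ. -/
theorem idTensor_constant_channel_pure
    {K H M ι : Type*} [Fintype K] [DecidableEq K] [Fintype H] [DecidableEq H]
    [Fintype M] [DecidableEq M] [Fintype ι] [DecidableEq ι]
    (ℰ : Matrix H H ℂ →ₗ[ℂ] Matrix M M ℂ)
    (hCP : CompletelyPositive ℰ) (hTP : TracePreserving ℰ)
    (ρ : Matrix M M ℂ) (hρ : ρ.PosSemidef) (hρtr : ρ.trace = 1)
    (hconst : ∀ φ : H → ℂ, (∑ i, Complex.normSq (φ i)) = 1 → ℰ (outer φ φ) = ρ)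
    (a : ι → K → ℂ) (b : ι → H → ℂ) (lam : ι → ℝ)
    (ha : ∀ i j, (∑ k, star (a i k) * a j k) = if i = j then 1 else 0)
    (hb : ∀ i j, (∑ h, star (b i h) * b j h) = if i = j then 1 else 0)
    (hlam : ∀ i, 0 ≤ lam i) (hsum : ∑ i, lam i = 1)
    (ψ : K × H → ℂ)
    (hψ : ψ = fun p => ∑ i, (Real.sqrt (lam i) : ℂ) * a i p.1 * b i p.2) :
    idTensor ℰ (outer ψ ψ) = (∑ i, (lam i : ℂ) • outer (a i) (a i)) ⊗ₖ ρ := by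
  have hE : ∀ i j, (ℰ (outer (b i) (b j))) = if i = j then ρ else 0 :=
    channel_outer ℰ ρ hconst b hb
  funext p q
  obtain ⟨k, m⟩ := p
  obtain ⟨k', m'⟩ := q
  have hmat : (Matrix.of fun a' b' => outer ψ ψ ((k, a')) ((k', b')))
      = ∑ i, ∑ j, (((Real.sqrt (lam i) : ℝ) : ℂ) * ((Real.sqrt (lam j) : ℝ) : ℂ)
          * a i k * star (a j k')) • outer (b i) (b j) := by
    ext p q
    simp only [Matrix.of_apply, outer, hψ, Matrix.sum_apply, Matrix.smul_apply, smul_eq_mul]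
    rw [star_sum, Finset.sum_mul_sum]
    refine Finset.sum_congr rfl fun i _ => Finset.sum_congr rfl fun j _ => ?_
    simp only [star_mul', Complex.star_def, Complex.conj_ofReal]
    ring
  show ℰ (Matrix.of fun a' b' => outer ψ ψ ((k, a')) ((k', b'))) m m'
      = ((∑ i, (lam i : ℂ) • outer (a i) (a i)) ⊗ₖ ρ) ((k, m)) ((k', m'))
  rw [hmat]
  simp only [map_sum, _root_.map_smul, hE]
  simp only [smul_ite, smul_zero, Finset.sum_ite_eq, Finset.mem_univ, if_true]
  have hss : ∀ i, ((Real.sqrt (lam i) : ℝ) : ℂ) * ((Real.sqrt (lam i) : ℝ) : ℂ) = ((lam i : ℝ) : ℂ) := by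
    intro i
    norm_cast
    exact Real.mul_self_sqrt (hlam i)
  simp only [Matrix.sum_apply, Matrix.smul_apply, Matrix.kroneckerMap_apply, outer,
    Matrix.of_apply, smul_eq_mul, Finset.sum_mul]
  refine Finset.sum_congr rfl fun i _ => ?_
  rw [← hss i]
  ring
end
end

section
/- Let ρ^{ABX} be a tripartite state that is classical on the joint system AX, i.e., ρ^{ABX} = Σ_{a,x} p(a,x) |a⟩⟨a| ⊗ ρ^B_{a,x} ⊗ |x⟩⟨x| for orthonormal bases {|a⟩} of H_A and {|x⟩} of H_X. Then S(AX) + S(BX) − S(ABX) − S(X) ≤ min{S(A), S(B)}. -/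
open Matrix BigOperators ComplexOrder

noncomputable section

/-- Von Neumann entropy of a matrix (through its eigenvalues when Hermitian). -/
def entropy {n : Type*} [Fintype n] [DecidableEq n] (ρ : Matrix n n ℂ) : ℝ :=
  if h : ρ.IsHermitian then ∑ i, Real.negMulLog (h.eigenvalues i) else 0

variable {A B X : Type*} [Fintype A] [DecidableEq A] [Fintype B] [DecidableEq B]
  [Fintype X] [DecidableEq X]

/-- Reduced state on AX. -/
def redAX (ρ : Matrix (A × B × X) (A × B × X) ℂ) : Matrix (A × X) (A × X) ℂ :=
  Matrix.of fun p q => ∑ b, ρ (p.1, b, p.2) (q.1, b, q.2)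

/-- Reduced state on BX. -/
def redBX (ρ : Matrix (A × B × X) (A × B × X) ℂ) : Matrix (B × X) (B × X) ℂ :=
  Matrix.of fun p q => ∑ a, ρ (a, p.1, p.2) (a, q.1, q.2)

/-- Reduced state on X. -/
def redX (ρ : Matrix (A × B × X) (A × B × X) ℂ) : Matrix X X ℂ :=
  Matrix.of fun x x' => ∑ a, ∑ b, ρ (a, b, x) (a, b, x')

/-- Reduced state on A. -/
def redA (ρ : Matrix (A × B × X) (A × B × X) ℂ) : Matrix A A ℂ :=
  Matrix.of fun a a' => ∑ b, ∑ x, ρ (a, b, x) (a', b, x)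

/-- Reduced state on B. -/
def redB (ρ : Matrix (A × B × X) (A × B × X) ℂ) : Matrix B B ℂ :=
  Matrix.of fun b b' => ∑ a, ∑ x, ρ (a, b, x) (a, b', x)

/-!
Because `A` and `X` are classical, `ρ` is block diagonal with blocks `p(a,x) ρ_{a,x}`, so
`S(AX) = H(p)`, `S(ABX) = H(p) + ∑ p(a,x) S(ρ_{a,x})`, `S(X)` and `S(A)` are Shannon entropies of
marginals of `p`, and `S(BX) = ∑ₓ S(σₓ)` with `σₓ = ∑ₐ p(a,x) ρ_{a,x}`. The bound by `S(A)` then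
follows from `S(BX) ≤ S(ABX)` and `S(AX) ≤ S(A) + S(X)`, the bound by `S(B)` from
`S(AX) ≤ S(ABX)` and `S(BX) ≤ S(B) + S(X)`.

The two quantum inputs are `S(∑ σ) ≤ ∑ S(σ)` (for `η(t) = -t log t` and unnormalized `σ ≥ 0`) and
`∑ₓ S(σₓ) ≤ S(∑ₓ σₓ) + H(tr σₓ)`. Both are proved in an eigenbasis of the sum, where its
eigenvalues become the diagonal entries of the conjugated summands: the second inequality then
comes from `S(τ) ≤ H(diag τ)` (Jensen) and classical subadditivity, the first from a Jensen
argument whose weights are controlled by the Gram identity `∑ σ = diag λ`.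
-/

section Shannon

open Real

lemma sum_mul_negMulLog_le_negMulLog_sum {ι : Type*} [Fintype ι] (w x : ι → ℝ) (hw : ∀ i, 0 ≤ w i)
    (hx : ∀ i, 0 ≤ x i) (hw_le : ∑ i, w i ≤ 1) :
    ∑ i, w i * negMulLog (x i) ≤ negMulLog (∑ i, w i * x i) := by
  -- the missing weight `1 - ∑ w` goes to the point `0`, where `negMulLog` vanishes
  simpa using concaveOn_negMulLog.map_add_sum_le (t := Finset.univ) (fun i _ => hw i)
    (by ring : (1 - ∑ i, w i) + ∑ i, w i = 1) (fun i _ => Set.mem_Ici.2 (hx i))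
    (sub_nonneg.2 hw_le) (Set.mem_Ici.2 le_rfl)

lemma div_self_mul_negMulLog (x : ℝ) : x / x * negMulLog x = negMulLog x := by
  rcases eq_or_ne x 0 with rfl | hx
  · simp
  · rw [div_self hx, one_mul]

lemma mul_negMulLog_div {c q : ℝ} (hc : 0 ≤ c) (hcq : c ≤ q) :
    q * negMulLog (c / q) = negMulLog c - c / q * negMulLog q := by
  rcases (hc.trans hcq).lt_or_eq with hq | rfl
  · have := negMulLog_mul (c / q) q
    rw [div_mul_cancel₀ c hq.ne'] at this
    linarith
  · simp [le_antisymm hcq hc]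

lemma sum_sum_negMulLog_le {ι κ : Type*} [Fintype ι] [Fintype κ] (c : κ → ι → ℝ)
    (hc : ∀ k i, 0 ≤ c k i)    (hc_sum : ∑ k, ∑ i, c k i = 1) :
    ∑ k, ∑ i, negMulLog (c k i)
      ≤ ∑ k, negMulLog (∑ i, c k i) + ∑ i, negMulLog (∑ k, c k i) := by
  set q : κ → ℝ := fun k => ∑ i, c k i
  have hc_le : ∀ k i, c k i ≤ q k := fun k i =>
    Finset.single_le_sum (fun i _ => hc k i) (Finset.mem_univ i)
  have hq_cancel : ∀ k i, q k * (c k i / q k) = c k i := fun k i =>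
    mul_div_cancel_of_imp' fun h => le_antisymm (h ▸ hc_le k i) (hc k i)
  have hcol : ∀ i, ∑ k, q k * negMulLog (c k i / q k) ≤ negMulLog (∑ k, c k i) := by
    intro i
    simpa only [hq_cancel] using sum_mul_negMulLog_le_negMulLog_sum q (fun k => c k i / q k)
      (fun k => Finset.sum_nonneg fun j _ => hc k j)
      (fun k => div_nonneg (hc k i) ((hc k i).trans (hc_le k i))) hc_sum.le
  have hrow : ∀ k, ∑ i, c k i / q k * negMulLog (q k) = negMulLog (q k) := fun k => by
    rw [← Finset.sum_mul, ← Finset.sum_div]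
    exact div_self_mul_negMulLog _
  have hsplit : ∑ i, ∑ k, q k * negMulLog (c k i / q k)
      = ∑ k, ∑ i, negMulLog (c k i) - ∑ k, negMulLog (q k) := by
    simp_rw [mul_negMulLog_div (hc _ _) (hc_le _ _), Finset.sum_sub_distrib]
    rw [Finset.sum_comm, Finset.sum_comm (f := fun i k => c k i / q k * negMulLog (q k))]
    simp only [hrow]
  linarith [Finset.sum_le_sum fun i (_ : i ∈ Finset.univ) => hcol i]

end Shannon

section Unitary

lemma posSemidef_star_mul_mul {n : Type*} [Fintype n] {M : Matrix n n ℂ} (hM : M.PosSemidef)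
    (V : Matrix n n ℂ) : (star V * M * V).PosSemidef := by
  simpa only [star_eq_conjTranspose] using hM.conjTranspose_mul_mul_same V

lemma posSemidef_sum_ofReal_smul {n ι : Type*} [Fintype n] [Fintype ι] {w : ι → ℝ}
    (hw : ∀ i, 0 ≤ w i) {M : ι → Matrix n n ℂ} (hM : ∀ i, (M i).PosSemidef) :
    (∑ i, (w i : ℂ) • M i).PosSemidef :=
  posSemidef_sum _ fun i _ => (hM i).smul (Complex.zero_le_real.2 (hw i))

lemma isHermitian_diagonal_ofReal {n : Type*} [DecidableEq n] (d : n → ℝ) :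
    (diagonal fun i => (d i : ℂ)).IsHermitian :=
  isHermitian_diagonal_iff.2 fun _ => Complex.conj_ofReal _

variable {n : Type*} [Fintype n] [DecidableEq n]

lemma sum_normSq_row_of_mem_unitaryGroup {U : Matrix n n ℂ} (hU : U ∈ unitaryGroup n ℂ) (i : n) :
    ∑ j, Complex.normSq (U i j) = 1 := by
  have := Matrix.ext_iff.2 (Unitary.mul_star_self_of_mem hU) i i
  simp only [mul_apply, star_apply, one_apply_eq, Complex.star_def, Complex.mul_conj] at this
  exact_mod_cast this

lemma sum_normSq_col_of_mem_unitaryGroup {U : Matrix n n ℂ} (hU : U ∈ unitaryGroup n ℂ) (j : n) :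
    ∑ i, Complex.normSq (U i j) = 1 := by
  simpa using sum_normSq_row_of_mem_unitaryGroup (Unitary.star_mem hU) j

lemma Matrix.IsHermitian.exists_unitary_eq_mul_diagonal_mul_star {M : Matrix n n ℂ}
    (hM : M.IsHermitian) : ∃ U ∈ unitaryGroup n ℂ,
      M = U * diagonal (fun b => (hM.eigenvalues b : ℂ)) * star U :=
  ⟨_, hM.eigenvectorUnitary.2, hM.spectral_theorem⟩

lemma apply_self_eq_sum_of_eq_mul_diagonal_mul_star {M U : Matrix n n ℂ} {μ : n → ℝ}
    (h : M = U * diagonal (fun b => (μ b : ℂ)) * star U) (j : n) :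
    M j j = ∑ b, ((μ b * Complex.normSq (U j b) : ℝ) : ℂ) := by
  rw [h, mul_apply]
  simp only [mul_diagonal, star_apply, Complex.star_def]
  push_cast
  refine Finset.sum_congr rfl fun b _ => ?_
  rw [← Complex.mul_conj]
  ring

lemma Matrix.IsHermitian.exists_unitary_star_mul_mul_eq_diagonal {M : Matrix n n ℂ}
    (hM : M.IsHermitian) : ∃ V ∈ unitaryGroup n ℂ,
      star V * M * V = diagonal fun j => (hM.eigenvalues j : ℂ) :=
  ⟨_, hM.eigenvectorUnitary.2, by
    simpa [Function.comp_def] using hM.conjStarAlgAut_star_eigenvectorUnitary⟩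

end Unitary

section Entropy

open Polynomial Real

variable {n m : Type*} [Fintype n] [DecidableEq n] [Fintype m] [DecidableEq m]

lemma entropy_eq_sum_roots_charpoly {M : Matrix n n ℂ} (hM : M.IsHermitian) :
    entropy M = (M.charpoly.roots.map fun z => negMulLog z.re).sum := by
  rw [entropy, dif_pos hM, hM.roots_charpoly_eq_eigenvalues, Multiset.map_map]
  rfl

lemma entropy_eq_of_charpoly_eq {M : Matrix n n ℂ} {N : Matrix m m ℂ} (hM : M.IsHermitian)
    (hN : N.IsHermitian) (h : M.charpoly = N.charpoly) : entropy M = entropy N := by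
  rw [entropy_eq_sum_roots_charpoly hM, entropy_eq_sum_roots_charpoly hN, h]

lemma entropy_eq_of_charpoly_eq_prod {M : Matrix n n ℂ} (hM : M.IsHermitian) {ι : Type*}
    [Fintype ι] (d : ι → ℝ) (h : M.charpoly = ∏ i, (Polynomial.X - C (d i : ℂ))) :
    entropy M = ∑ i, negMulLog (d i) := by
  rw [entropy_eq_sum_roots_charpoly hM, h, roots_prod _ _ (Monic.ne_zero
    (monic_prod_of_monic _ _ fun i _ => monic_X_sub_C _))]
  simp only [roots_X_sub_C, Multiset.map_bind, Multiset.sum_bind]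
  simp

lemma entropy_diagonal (d : n → ℝ) :
    entropy (diagonal fun i => (d i : ℂ)) = ∑ i, negMulLog (d i) :=
  entropy_eq_of_charpoly_eq_prod (isHermitian_diagonal_ofReal d) d (charpoly_diagonal _)

lemma charpoly_unitary_mul_mul_star {U : Matrix n n ℂ} (hU : U ∈ unitaryGroup n ℂ)
    (M : Matrix n n ℂ) : (U * M * star U).charpoly = M.charpoly := by
  rw [Matrix.mul_assoc, charpoly_mul_comm, Matrix.mul_assoc, Unitary.star_mul_self_of_mem hU,
    Matrix.mul_one]

lemma entropy_unitary_mul_mul_star {U : Matrix n n ℂ} (hU : U ∈ unitaryGroup n ℂ)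
    {M : Matrix n n ℂ} (hM : M.IsHermitian) : entropy (U * M * star U) = entropy M :=
  entropy_eq_of_charpoly_eq (isHermitian_mul_mul_conjTranspose U hM) hM
    (charpoly_unitary_mul_mul_star hU M)

lemma entropy_star_mul_mul {V : Matrix n n ℂ} (hV : V ∈ unitaryGroup n ℂ) {M : Matrix n n ℂ}
    (hM : M.IsHermitian) : entropy (star V * M * V) = entropy M := by
  simpa using entropy_unitary_mul_mul_star (Unitary.star_mem hV) hM

lemma entropy_reindex (e : n ≃ m) {M : Matrix n n ℂ} (hM : M.IsHermitian) :
    entropy (reindex e e M) = entropy M :=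
  entropy_eq_of_charpoly_eq (hM.reindex e) hM (charpoly_reindex e M)

lemma charpoly_blockDiagonal {K : Type*} [Fintype K] [DecidableEq K] (σ : K → Matrix n n ℂ) :
    (blockDiagonal σ).charpoly = ∏ k, (σ k).charpoly := by
  have : charmatrix (blockDiagonal σ) = blockDiagonal fun k => charmatrix (σ k) := by
    ext ⟨i, k⟩ ⟨j, k'⟩
    by_cases hk : k = k'
    · subst hk
      by_cases hij : i = j <;> simp [blockDiagonal_apply_eq, hij]
    · simp [blockDiagonal_apply_ne _ _ _ hk, hk]
  rw [charpoly, this, det_blockDiagonal]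
  rfl

lemma entropy_blockDiagonal {K : Type*} [Fintype K] [DecidableEq K] {σ : K → Matrix n n ℂ}
    (hσ : ∀ k, (σ k).IsHermitian) : entropy (blockDiagonal σ) = ∑ k, entropy (σ k) := by
  rw [entropy_eq_of_charpoly_eq_prod (isHermitian_blockDiagonal_iff.2 hσ)
      (fun ik : n × K => (hσ ik.2).eigenvalues ik.1) (by
        rw [charpoly_blockDiagonal, Fintype.prod_prod_type_right]
        exact Finset.prod_congr rfl fun k _ => (hσ k).charpoly_eq),
    Fintype.sum_prod_type_right]
  exact Finset.sum_congr rfl fun k _ => by rw [entropy, dif_pos (hσ k)]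

lemma entropy_ofReal_smul {M : Matrix n n ℂ} (hM : M.IsHermitian) (c : ℝ) :
    entropy ((c : ℂ) • M) = negMulLog c * M.trace.re + c * entropy M := by
  obtain ⟨U, hU, hMU⟩ := hM.exists_unitary_eq_mul_diagonal_mul_star
  have hcM : (c : ℂ) • M = U * diagonal (fun i => ((c * hM.eigenvalues i : ℝ) : ℂ)) * star U := by
    conv_lhs => rw [hMU]
    rw [← Matrix.smul_mul, ← Matrix.mul_smul, ← diagonal_smul]
    congr 3
    ext i
    simp
  rw [hcM, entropy_unitary_mul_mul_star hU (isHermitian_diagonal_ofReal _), entropy_diagonal,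
    hM.trace_eq_sum_eigenvalues, entropy, dif_pos hM, Complex.re_sum, Finset.mul_sum,
    Finset.mul_sum, ← Finset.sum_add_distrib]
  simp [negMulLog_mul, mul_comm]

lemma entropy_nonneg {M : Matrix n n ℂ} (hM : M.PosSemidef) (htr : M.trace = 1) :
    0 ≤ entropy M := by
  have hsum : ∑ i, hM.1.eigenvalues i = 1 := by
    simpa [hM.1.trace_eq_sum_eigenvalues] using congrArg Complex.re htr
  rw [entropy, dif_pos hM.1]
  refine Finset.sum_nonneg fun i _ => negMulLog_nonneg (hM.eigenvalues_nonneg i) ?_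
  exact hsum ▸ Finset.single_le_sum (fun j _ => hM.eigenvalues_nonneg j) (Finset.mem_univ i)

end Entropy

section RankOne

open Real

variable {I J : Type*} [Fintype I] [Fintype J] [DecidableEq I] [DecidableEq J]

lemma mul_sum_normSq_div_le_one {μ : I → ℝ} (hμ : ∀ i, 0 ≤ μ i) {P : Matrix I J ℂ} {lam : J → ℝ}
    (hP : Pᴴ * diagonal (fun i => (μ i : ℂ)) * P = diagonal fun j => (lam j : ℂ)) (i : I) :
    μ i * ∑ j, Complex.normSq (P i j) / lam j ≤ 1 := by
  -- Test `hP` on `y j = conj (P i j) / lam j`: for `z = P y` it gives `∑ μ |z|² = t`, where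
  -- `t = ∑ |P i j|² / lam j = z i`; hence `μ i t² ≤ t`.
  obtain ⟨y, hy⟩ : ∃ y : J → ℂ, y = fun j => star (P i j) / lam j := ⟨_, rfl⟩
  have hquad : ∑ i', μ i' * Complex.normSq ((P *ᵥ y) i')
      = ∑ j, Complex.normSq (P i j) / lam j := by
    have h := congrArg (star y ⬝ᵥ · *ᵥ y) hP
    simp only [← mulVec_mulVec] at h
    rw [dotProduct_mulVec, ← star_mulVec] at h
    simp only [dotProduct, mulVec_diagonal, Pi.star_apply] at h
    apply Complex.ofReal_injective
    push_cast
    convert h using 2 with i' _ j _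
    · rw [Complex.normSq_eq_conj_mul_self]
      simp only [Complex.star_def]
      ring
    · rcases eq_or_ne (lam j) 0 with h0 | h0
      · simp [hy, h0]
      · simp only [hy, Complex.star_def, map_div₀, Complex.conj_conj, Complex.conj_ofReal]
        rw [Complex.normSq_eq_conj_mul_self]
        field_simp
  have hz : (P *ᵥ y) i = ((∑ j, Complex.normSq (P i j) / lam j : ℝ) : ℂ) := by
    simp only [mulVec, dotProduct, hy]
    push_cast
    refine Finset.sum_congr rfl fun j _ => ?_
    rw [Complex.normSq_eq_conj_mul_self, Complex.star_def]
    ring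
  set t := ∑ j, Complex.normSq (P i j) / lam j
  have ht : 0 ≤ t := hquad ▸ Finset.sum_nonneg fun i' _ =>
    mul_nonneg (hμ i') (Complex.normSq_nonneg _)
  have hsq : μ i * t ^ 2 ≤ t := by
    calc μ i * t ^ 2 = μ i * Complex.normSq ((P *ᵥ y) i) := by
          rw [hz, Complex.normSq_ofReal, sq]
      _ ≤ ∑ i', μ i' * Complex.normSq ((P *ᵥ y) i') :=
        Finset.single_le_sum (fun i' _ => mul_nonneg (hμ i') (Complex.normSq_nonneg _))
          (Finset.mem_univ i)
      _ = t := hquad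
  rcases ht.eq_or_lt with h0 | hpos
  · simp [← h0]
  · nlinarith

lemma sum_negMulLog_le_of_conjTranspose_mul_diagonal_mul {μ : I → ℝ} (hμ : ∀ i, 0 ≤ μ i)
    {P : Matrix I J ℂ} (hP_row : ∀ i, ∑ j, Complex.normSq (P i j) = 1) {lam : J → ℝ}
    (hP : Pᴴ * diagonal (fun i => (μ i : ℂ)) * P = diagonal fun j => (lam j : ℂ)) :
    ∑ j, negMulLog (lam j) ≤ ∑ i, negMulLog (μ i) := by
  have hr : ∀ i j, 0 ≤ μ i * Complex.normSq (P i j) := fun i j =>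
    mul_nonneg (hμ i) (Complex.normSq_nonneg _)
  have hcol : ∀ j, ∑ i, μ i * Complex.normSq (P i j) = lam j := by
    intro j
    have h := Matrix.ext_iff.2 hP j j
    rw [mul_apply, diagonal_apply_eq] at h
    simp only [mul_diagonal, conjTranspose_apply] at h
    apply Complex.ofReal_injective
    rw [← h]
    push_cast
    refine Finset.sum_congr rfl fun i _ => ?_
    rw [Complex.normSq_eq_conj_mul_self, Complex.star_def]
    ring
  have hr_le : ∀ i j, μ i * Complex.normSq (P i j) ≤ lam j := fun i j =>
    hcol j ▸ Finset.single_le_sum (fun i _ => hr i j) (Finset.mem_univ i)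
  -- Row `i` splits `μ i` into masses `r i j = μ i |P i j|²` with column sums `lam j`; the
  -- weights `r i j / lam j` have total at most one, so concavity of `negMulLog` applies per row.
  have hjensen : ∀ i, ∑ j, μ i * Complex.normSq (P i j) / lam j * negMulLog (lam j)
      ≤ negMulLog (μ i) := by
    intro i
    have hweights : ∑ j, μ i * Complex.normSq (P i j) / lam j ≤ 1 := by
      simpa only [mul_div_assoc, Finset.mul_sum] using mul_sum_normSq_div_le_one hμ hP i
    have hmean : ∑ j, μ i * Complex.normSq (P i j) / lam j * lam j = μ i := by
      simp only [fun j => div_mul_cancel_of_imp fun h0 : lam j = 0 =>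
        le_antisymm (h0 ▸ hr_le i j) (hr i j), ← Finset.mul_sum, hP_row, mul_one]
    simpa only [hmean] using sum_mul_negMulLog_le_negMulLog_sum _ lam
      (fun j => div_nonneg (hr i j) ((hr i j).trans (hr_le i j)))
      (fun j => (hr i j).trans (hr_le i j)) hweights
  calc ∑ j, negMulLog (lam j)
      = ∑ j, (∑ i, μ i * Complex.normSq (P i j)) / lam j * negMulLog (lam j) := by
        simp only [hcol, div_self_mul_negMulLog]
    _ = ∑ i, ∑ j, μ i * Complex.normSq (P i j) / lam j * negMulLog (lam j) := by
        simp only [Finset.sum_div, Finset.sum_mul]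
        exact Finset.sum_comm
    _ ≤ _ := Finset.sum_le_sum fun i _ => hjensen i

end RankOne

section EntropyInequalities

open Real

variable {n K : Type*} [Fintype n] [DecidableEq n] [Fintype K]

lemma entropy_le_sum_negMulLog_diag {M : Matrix n n ℂ} (hM : M.PosSemidef) :
    entropy M ≤ ∑ j, negMulLog (M j j).re := by
  obtain ⟨U, hU, hMU⟩ := hM.1.exists_unitary_eq_mul_diagonal_mul_star
  set μ := hM.1.eigenvalues
  have hjensen : ∀ j, ∑ b, Complex.normSq (U j b) * negMulLog (μ b) ≤ negMulLog (M j j).re := by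
    intro j
    rw [apply_self_eq_sum_of_eq_mul_diagonal_mul_star hMU j]
    simpa [mul_comm] using sum_mul_negMulLog_le_negMulLog_sum (fun b => Complex.normSq (U j b)) μ
      (fun b => Complex.normSq_nonneg _) hM.eigenvalues_nonneg
      (sum_normSq_row_of_mem_unitaryGroup hU j).le
  calc entropy M = ∑ b, (∑ j, Complex.normSq (U j b)) * negMulLog (μ b) := by
        simp only [sum_normSq_col_of_mem_unitaryGroup hU, one_mul]
        rw [entropy, dif_pos hM.1]
    _ = ∑ j, ∑ b, Complex.normSq (U j b) * negMulLog (μ b) := by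
        simp only [Finset.sum_mul]
        exact Finset.sum_comm
    _ ≤ _ := Finset.sum_le_sum fun j _ => hjensen j

lemma sum_negMulLog_le_sum_entropy_of_sum_eq_diagonal [DecidableEq K] {τ : K → Matrix n n ℂ}
    (hτ : ∀ k, (τ k).PosSemidef) {lam : n → ℝ} (h : ∑ k, τ k = diagonal fun j => (lam j : ℂ)) :
    ∑ j, negMulLog (lam j) ≤ ∑ k, entropy (τ k) := by
  choose U hU hτU using fun k => (hτ k).1.exists_unitary_eq_mul_diagonal_mul_star
  -- the eigenvectors of all the `τ k` together, as the rows of one matrix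
  obtain ⟨P, hP_def⟩ : ∃ P : Matrix (K × n) n ℂ, P = of fun kb j => star (U kb.1 j kb.2) :=
    ⟨_, rfl⟩
  have hP : Pᴴ * diagonal (fun kb : K × n => ((hτ kb.1).1.eigenvalues kb.2 : ℂ)) * P
      = diagonal fun j => (lam j : ℂ) := by
    rw [← h]
    ext j j'
    rw [mul_apply, Fintype.sum_prod_type, Matrix.sum_apply]
    refine Finset.sum_congr rfl fun k _ => ?_
    rw [hτU k, mul_apply]
    simp [hP_def, mul_diagonal]
  calc ∑ j, negMulLog (lam j)
      ≤ ∑ kb : K × n, negMulLog ((hτ kb.1).1.eigenvalues kb.2) :=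
        sum_negMulLog_le_of_conjTranspose_mul_diagonal_mul
          (μ := fun kb : K × n => (hτ kb.1).1.eigenvalues kb.2) (lam := lam)
          (fun kb => (hτ kb.1).eigenvalues_nonneg kb.2)
          (fun kb => by simpa [hP_def] using sum_normSq_col_of_mem_unitaryGroup (hU kb.1) kb.2) hP
    _ = ∑ k, entropy (τ k) := by
        rw [Fintype.sum_prod_type]
        exact Finset.sum_congr rfl fun k _ => by rw [entropy, dif_pos (hτ k).1]

lemma sum_entropy_le_of_sum_eq_diagonal {τ : K → Matrix n n ℂ} (hτ : ∀ k, (τ k).PosSemidef)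
    {lam : n → ℝ} (h : ∑ k, τ k = diagonal fun j => (lam j : ℂ)) (htr : ∑ k, (τ k).trace = 1) :
    ∑ k, entropy (τ k) ≤ ∑ j, negMulLog (lam j) + ∑ k, negMulLog (τ k).trace.re := by
  have hrow : ∀ k, ∑ j, (τ k j j).re = (τ k).trace.re := fun k => by
    rw [trace, Complex.re_sum]
    rfl
  have hcol : ∀ j, ∑ k, (τ k j j).re = lam j := fun j => by
    simpa [Matrix.sum_apply] using congrArg Complex.re (Matrix.ext_iff.2 h j j)
  have htot : ∑ k, ∑ j, (τ k j j).re = 1 := by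
    simpa [hrow, Complex.re_sum] using congrArg Complex.re htr
  calc ∑ k, entropy (τ k) ≤ ∑ k, ∑ j, negMulLog (τ k j j).re :=
        Finset.sum_le_sum fun k _ => entropy_le_sum_negMulLog_diag (hτ k)
    _ ≤ ∑ k, negMulLog (∑ j, (τ k j j).re) + ∑ j, negMulLog (∑ k, (τ k j j).re) :=
        sum_sum_negMulLog_le _ (fun k j => (Complex.le_def.1 (hτ k).diag_nonneg).1) htot
    _ = _ := by simp only [hrow, hcol, add_comm]

lemma entropy_sum_le [DecidableEq K] {σ : K → Matrix n n ℂ} (hσ : ∀ k, (σ k).PosSemidef) :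
    entropy (∑ k, σ k) ≤ ∑ k, entropy (σ k) := by
  have hM := (posSemidef_sum Finset.univ fun k _ => hσ k).1
  obtain ⟨V, hV, hdiag⟩ := hM.exists_unitary_star_mul_mul_eq_diagonal
  calc entropy (∑ k, σ k) = ∑ j, negMulLog (hM.eigenvalues j) := by rw [entropy, dif_pos hM]
    _ ≤ ∑ k, entropy (star V * σ k * V) :=
        sum_negMulLog_le_sum_entropy_of_sum_eq_diagonal (lam := hM.eigenvalues)
          (fun k => posSemidef_star_mul_mul (hσ k) V)
          (by rw [← Finset.sum_mul, ← Finset.mul_sum, hdiag])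
    _ = ∑ k, entropy (σ k) := by simp only [entropy_star_mul_mul hV (hσ _).1]

lemma sum_entropy_le_entropy_sum_add {σ : K → Matrix n n ℂ} (hσ : ∀ k, (σ k).PosSemidef)
    (htr : ∑ k, (σ k).trace = 1) :
    ∑ k, entropy (σ k) ≤ entropy (∑ k, σ k) + ∑ k, negMulLog (σ k).trace.re := by
  have hM := (posSemidef_sum Finset.univ fun k _ => hσ k).1
  obtain ⟨V, hV, hdiag⟩ := hM.exists_unitary_star_mul_mul_eq_diagonal
  have htr_conj : ∀ k, (star V * σ k * V).trace = (σ k).trace := fun k => by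
    rw [trace_mul_cycle, Unitary.mul_star_self_of_mem hV, Matrix.one_mul]
  calc ∑ k, entropy (σ k) = ∑ k, entropy (star V * σ k * V) := by
        simp only [entropy_star_mul_mul hV (hσ _).1]
    _ ≤ ∑ j, negMulLog (hM.eigenvalues j) + ∑ k, negMulLog (σ k).trace.re := by
        simpa only [htr_conj] using sum_entropy_le_of_sum_eq_diagonal (lam := hM.eigenvalues)
          (fun k => posSemidef_star_mul_mul (hσ k) V)
          (by rw [← Finset.sum_mul, ← Finset.mul_sum, hdiag])
          (by simpa only [htr_conj] using htr)
    _ = _ := by rw [entropy, dif_pos hM]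

end EntropyInequalities

section ClassicalQuantum

open Real

variable {A B X : Type*} [DecidableEq A] [DecidableEq X]

def cqState (p : A × X → ℝ) (ρB : A → X → Matrix B B ℂ) : Matrix (A × B × X) (A × B × X) ℂ :=
  Matrix.of fun i j =>
    if i.1 = j.1 ∧ i.2.2 = j.2.2 then (p (i.1, i.2.2) : ℂ) * ρB i.1 i.2.2 i.2.1 j.2.1 else 0

variable {p : A × X → ℝ} {ρB : A → X → Matrix B B ℂ}

lemma redBX_cqState [Fintype A] :
    redBX (cqState p ρB) = blockDiagonal fun x => ∑ a, (p (a, x) : ℂ) • ρB a x := by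
  ext ⟨b, x⟩ ⟨b', x'⟩
  simp [redBX, cqState, blockDiagonal_apply, Matrix.sum_apply]

lemma redB_cqState [Fintype A] [Fintype X] :
    redB (cqState p ρB) = ∑ x, ∑ a, (p (a, x) : ℂ) • ρB a x := by
  ext b b'
  simp only [redB, cqState, of_apply, and_self, if_true, Matrix.sum_apply, Matrix.smul_apply,
    smul_eq_mul]
  exact Finset.sum_comm

lemma redAX_cqState [Fintype B] (htr : ∀ a x, (ρB a x).trace = 1) :
    redAX (cqState p ρB) = diagonal fun ax => (p ax : ℂ) := by
  have hdiag : ∀ a x, ∑ b, ρB a x b b = 1 := htr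
  ext ⟨a, x⟩ ⟨a', x'⟩
  simp [redAX, cqState, diagonal_apply, ← Finset.mul_sum, hdiag]

lemma redX_cqState [Fintype A] [Fintype B] (htr : ∀ a x, (ρB a x).trace = 1) :
    redX (cqState p ρB) = diagonal fun x => ((∑ a, p (a, x) : ℝ) : ℂ) := by
  have hdiag : ∀ a x, ∑ b, ρB a x b b = 1 := htr
  ext x x'
  simp [redX, cqState, diagonal_apply, ← Finset.mul_sum, hdiag]

lemma redA_cqState [Fintype B] [Fintype X] (htr : ∀ a x, (ρB a x).trace = 1) :
    redA (cqState p ρB) = diagonal fun a => ((∑ x, p (a, x) : ℝ) : ℂ) := by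
  have hdiag : ∀ a x, ∑ b, ρB a x b b = 1 := htr
  ext a a'
  simp only [redA, cqState, of_apply, diagonal_apply, and_true]
  split_ifs
  · rw [Finset.sum_comm]
    simp [← Finset.mul_sum, hdiag]
  · simp

variable [Fintype A] [Fintype B] [Fintype X]

lemma entropy_redAX_cqState_le_add (hp : ∀ ax, 0 ≤ p ax) (hp_sum : ∑ ax, p ax = 1)
    (htr : ∀ a x, (ρB a x).trace = 1) :
    entropy (redAX (cqState p ρB))
      ≤ entropy (redA (cqState p ρB)) + entropy (redX (cqState p ρB)) := by
  rw [redAX_cqState htr, redA_cqState htr, redX_cqState htr, entropy_diagonal, entropy_diagonal,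
    entropy_diagonal, Fintype.sum_prod_type]
  exact sum_sum_negMulLog_le (fun a x => p (a, x)) (fun a x => hp (a, x))
    (by rwa [← Fintype.sum_prod_type])

variable [DecidableEq B]

lemma entropy_cqState (hH : ∀ a x, (ρB a x).IsHermitian) (htr : ∀ a x, (ρB a x).trace = 1) :
    entropy (cqState p ρB) = ∑ ax, (negMulLog (p ax) + p ax * entropy (ρB ax.1 ax.2)) := by
  let e : B × (A × X) ≃ A × B × X :=
    { toFun := fun j => (j.2.1, j.1, j.2.2)
      invFun := fun i => (i.2.1, i.1, i.2.2)
      left_inv := fun _ => rfl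
      right_inv := fun _ => rfl }
  have hblock : cqState p ρB
      = reindex e e (blockDiagonal fun ax : A × X => (p ax : ℂ) • ρB ax.1 ax.2) := by
    ext ⟨a, b, x⟩ ⟨a', b', x'⟩
    simp [cqState, e, blockDiagonal_apply]
  have hH' : ∀ ax : A × X, ((p ax : ℂ) • ρB ax.1 ax.2).IsHermitian := fun ax =>
    (hH ax.1 ax.2).smul (Complex.conj_ofReal _)
  rw [hblock, entropy_reindex e (isHermitian_blockDiagonal_iff.2 hH'), entropy_blockDiagonal hH']
  refine Finset.sum_congr rfl fun ax _ => ?_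
  rw [entropy_ofReal_smul (hH ax.1 ax.2), htr, Complex.one_re, mul_one]

lemma entropy_redAX_cqState_le_entropy_cqState (hp : ∀ ax, 0 ≤ p ax)
    (hpsd : ∀ a x, (ρB a x).PosSemidef) (htr : ∀ a x, (ρB a x).trace = 1) :
    entropy (redAX (cqState p ρB)) ≤ entropy (cqState p ρB) := by
  rw [redAX_cqState htr, entropy_diagonal, entropy_cqState (fun a x => (hpsd a x).1) htr,
    Finset.sum_add_distrib]
  exact le_add_of_nonneg_right <| Finset.sum_nonneg fun ax _ =>
    mul_nonneg (hp ax) (entropy_nonneg (hpsd _ _) (htr _ _))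

lemma entropy_redBX_cqState_le_entropy_cqState (hp : ∀ ax, 0 ≤ p ax)
    (hpsd : ∀ a x, (ρB a x).PosSemidef) (htr : ∀ a x, (ρB a x).trace = 1) :
    entropy (redBX (cqState p ρB)) ≤ entropy (cqState p ρB) := by
  rw [redBX_cqState, entropy_blockDiagonal fun x =>
      (posSemidef_sum_ofReal_smul (fun a => hp (a, x)) fun a => hpsd a x).1,
    entropy_cqState (fun a x => (hpsd a x).1) htr, Fintype.sum_prod_type_right]
  gcongr with x
  calc entropy (∑ a, (p (a, x) : ℂ) • ρB a x) ≤ ∑ a, entropy ((p (a, x) : ℂ) • ρB a x) :=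
        entropy_sum_le fun a => (hpsd a x).smul (Complex.zero_le_real.2 (hp (a, x)))
    _ = _ := Finset.sum_congr rfl fun a _ => by
        rw [entropy_ofReal_smul (hpsd a x).1, htr, Complex.one_re, mul_one]

lemma entropy_redBX_cqState_le_add (hp : ∀ ax, 0 ≤ p ax) (hp_sum : ∑ ax, p ax = 1)
    (hpsd : ∀ a x, (ρB a x).PosSemidef) (htr : ∀ a x, (ρB a x).trace = 1) :
    entropy (redBX (cqState p ρB))
      ≤ entropy (redB (cqState p ρB)) + entropy (redX (cqState p ρB)) := by
  have hpsd_cond := fun x => posSemidef_sum_ofReal_smul (fun a => hp (a, x)) fun a => hpsd a x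
  have htr_cond : ∀ x, (∑ a, (p (a, x) : ℂ) • ρB a x).trace = ((∑ a, p (a, x) : ℝ) : ℂ) := by
    intro x
    simp [trace_sum, htr]
  have h := sum_entropy_le_entropy_sum_add hpsd_cond (by
    simp only [htr_cond]
    exact_mod_cast (Fintype.sum_prod_type_right p).symm.trans hp_sum)
  simp only [htr_cond, Complex.ofReal_re] at h
  rwa [redBX_cqState, entropy_blockDiagonal fun x => (hpsd_cond x).1, redB_cqState,
    redX_cqState htr, entropy_diagonal]

end ClassicalQuantum

/-- For a tripartite state classical on AX,
S(AX) + S(BX) − S(ABX) − S(X) ≤ min{S(A), S(B)}. -/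
theorem tripartite_entropy_bound_classical_AX
    (p : A × X → ℝ) (hp : ∀ ax, 0 ≤ p ax) (hpsum : ∑ ax, p ax = 1)
    (ρB : A → X → Matrix B B ℂ)
    (hρB : ∀ a x, (ρB a x).PosSemidef ∧ (ρB a x).trace = 1)
    (ρ : Matrix (A × B × X) (A × B × X) ℂ)
    (hρ : ρ = Matrix.of fun i j =>
      if i.1 = j.1 ∧ i.2.2 = j.2.2 then (p (i.1, i.2.2) : ℂ) * ρB i.1 i.2.2 i.2.1 j.2.1
      else 0) :
    entropy (redAX ρ) + entropy (redBX ρ) - entropy ρ - entropy (redX ρ)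
        ≤ min (entropy (redA ρ)) (entropy (redB ρ)) := by
  obtain rfl : ρ = cqState p ρB := hρ
  have hpsd := fun a x => (hρB a x).1
  have htr := fun a x => (hρB a x).2
  have hAX_A := entropy_redAX_cqState_le_add hp hpsum htr
  have hAX_ABX := entropy_redAX_cqState_le_entropy_cqState hp hpsd htr
  have hBX_B := entropy_redBX_cqState_le_add hp hpsum hpsd htr
  have hBX_ABX := entropy_redBX_cqState_le_entropy_cqState hp hpsd htr
  exact le_min (by linarith) (by linarith)
end
end

section
/- Let |φ₁⟩ and |φ₂⟩ be two purifications in H ⊗ K of the same density matrix ρ on K (i.e., Tr_H |φ_i⟩⟨φ_i| = ρ for i = 1, 2). Then there exists a unitary U on H such that (U ⊗ I_K)|φ₁⟩ = |φ₂⟩. -/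
open Matrix BigOperators ComplexOrder Kronecker
open scoped InnerProductSpace

noncomputable section

lemma toEuclideanLin_mul' {K H J : Type*} [Fintype H] [DecidableEq H] [Fintype K] [DecidableEq K] [Fintype J] [DecidableEq J]
    (M : Matrix K H ℂ) (N : Matrix H J ℂ) :
    Matrix.toEuclideanLin (M * N) =
      (Matrix.toEuclideanLin M) ∘ₗ (Matrix.toEuclideanLin N) := by
  apply LinearMap.ext
  intro x
  simp [Matrix.toEuclideanLin_apply, Matrix.mulVec_mulVec]

lemma exists_unitary_of_gram_eq {H K : Type*} [Fintype H] [DecidableEq H] [Fintype K]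
    [DecidableEq K] (A B : Matrix K H ℂ) (h : A * Aᴴ = B * Bᴴ) :
    ∃ W ∈ Matrix.unitaryGroup H ℂ, B = A * W := by
  classical
  set Ad : EuclideanSpace ℂ K →ₗ[ℂ] EuclideanSpace ℂ H := Matrix.toEuclideanLin Aᴴ with hAd
  set Bd : EuclideanSpace ℂ K →ₗ[ℂ] EuclideanSpace ℂ H := Matrix.toEuclideanLin Bᴴ with hBd
  have hAd_adj : Ad = LinearMap.adjoint (Matrix.toEuclideanLin A) :=
    Matrix.toEuclideanLin_conjTranspose_eq_adjoint A
  have hBd_adj : Bd = LinearMap.adjoint (Matrix.toEuclideanLin B) :=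
    Matrix.toEuclideanLin_conjTranspose_eq_adjoint B
  have hcomp : (Matrix.toEuclideanLin A) ∘ₗ Ad = (Matrix.toEuclideanLin B) ∘ₗ Bd := by
    rw [hAd, hBd, ← toEuclideanLin_mul', ← toEuclideanLin_mul', h]
  -- equal norms
  have hnorm : ∀ x, ‖Ad x‖ = ‖Bd x‖ := by
    intro x
    have h1 : (⟪Ad x, Ad x⟫_ℂ) = ⟪Bd x, Bd x⟫_ℂ := by
      rw [hAd_adj, hBd_adj, LinearMap.adjoint_inner_left, LinearMap.adjoint_inner_left]
      rw [hAd_adj, hBd_adj] at hcomp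
      have := congrFun (congrArg DFunLike.coe hcomp) x
      simp only [LinearMap.comp_apply] at this
      rw [this]
    rw [inner_self_eq_norm_sq_to_K, inner_self_eq_norm_sq_to_K] at h1
    have h2 : (‖Ad x‖ : ℝ) ^ 2 = ‖Bd x‖ ^ 2 := by
      exact_mod_cast h1
    exact (sq_eq_sq₀ (norm_nonneg _) (norm_nonneg _)).mp h2
  have hker : LinearMap.ker Ad ≤ LinearMap.ker Bd := by
    intro x hx
    simp only [LinearMap.mem_ker] at hx ⊢
    have := hnorm x
    rw [hx, norm_zero] at this
    exact norm_eq_zero.mp this.symm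
  -- the isometry on range Ad
  let g : ↥(LinearMap.range Ad) →ₗ[ℂ] EuclideanSpace ℂ H :=
    (Submodule.liftQ (LinearMap.ker Ad) Bd hker) ∘ₗ
      (Ad.quotKerEquivRange.symm : ↥(LinearMap.range Ad) →ₗ[ℂ] _)
  have hg : ∀ x : EuclideanSpace ℂ K, ∀ hm : Ad x ∈ LinearMap.range Ad,
      g ⟨Ad x, hm⟩ = Bd x := by
    intro x hm
    simp only [g, LinearMap.comp_apply, LinearEquiv.coe_coe,
      LinearMap.quotKerEquivRange_symm_apply_image]
    simp [Submodule.mkQ_apply]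
  have hgiso : ∀ s : ↥(LinearMap.range Ad), ‖g s‖ = ‖s‖ := by
    rintro ⟨s, hs⟩
    obtain ⟨x, rfl⟩ := hs
    rw [hg x (LinearMap.mem_range_self _ x)]
    rw [Submodule.coe_norm]
    exact (hnorm x).symm
  let L : ↥(LinearMap.range Ad) →ₗᵢ[ℂ] EuclideanSpace ℂ H := ⟨g, hgiso⟩
  let V := L.extend
  have hV : ∀ x, V (Ad x) = Bd x := by
    intro x
    have : Ad x = ((⟨Ad x, LinearMap.mem_range_self _ x⟩ : ↥(LinearMap.range Ad)) :
        EuclideanSpace ℂ H) := rfl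
    rw [this, LinearIsometry.extend_apply]
    exact hg x _
  -- matrix of V
  set W' : Matrix H H ℂ := Matrix.toEuclideanLin.symm V.toLinearMap with hW'
  have hW'lin : Matrix.toEuclideanLin W' = V.toLinearMap := by
    simp [hW']
  have hunit : W'ᴴ * W' = 1 := by
    apply Matrix.toEuclideanLin.injective
    rw [toEuclideanLin_mul', Matrix.toEuclideanLin_conjTranspose_eq_adjoint, hW'lin]
    apply LinearMap.ext
    intro x
    apply ext_inner_right ℂ
    intro y
    rw [LinearMap.comp_apply, LinearMap.adjoint_inner_left]
    simp only [LinearIsometry.coe_toLinearMap]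
    rw [V.inner_map_map]
    simp [Matrix.toEuclideanLin_apply]
  have hrel : Bᴴ = W' * Aᴴ := by
    apply Matrix.toEuclideanLin.injective
    rw [toEuclideanLin_mul', hW'lin, ← hAd, ← hBd]
    exact LinearMap.ext fun x => (hV x).symm
  refine ⟨W'ᴴ, ?_, ?_⟩
  · rw [Matrix.mem_unitaryGroup_iff]
    simpa only [Matrix.star_eq_conjTranspose, Matrix.conjTranspose_conjTranspose] using hunit
  · have := congrArg Matrix.conjTranspose hrel
    simpa [Matrix.conjTranspose_mul] using this
/-- Partial trace over the first (H) factor of the projector onto a vector of H ⊗ K. -/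
def ptraceFirstOuter {H K : Type*} [Fintype H] [Fintype K]
    (φ : H × K → ℂ) : Matrix K K ℂ :=
  Matrix.of fun k k' => ∑ h, φ (h, k) * star (φ (h, k'))

/-- Local transition theorem: two purifications in H ⊗ K of the same density matrix
ρ on K are related by a local unitary on H. -/
theorem local_transition
    {H K : Type*} [Fintype H] [DecidableEq H] [Fintype K] [DecidableEq K]
    (hdim : Fintype.card K ≤ Fintype.card H)
    (ρ : Matrix K K ℂ) (hρ : ρ.PosSemidef) (htr : ρ.trace = 1)
    (φ₁ φ₂ : H × K → ℂ)
    (h₁ : ptraceFirstOuter φ₁ = ρ) (h₂ : ptraceFirstOuter φ₂ = ρ) :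
    ∃ U ∈ Matrix.unitaryGroup H ℂ, (U ⊗ₖ (1 : Matrix K K ℂ)) *ᵥ φ₁ = φ₂ := by
  classical
  set M₁ : Matrix K H ℂ := Matrix.of fun k h => φ₁ (h, k) with hM₁
  set M₂ : Matrix K H ℂ := Matrix.of fun k h => φ₂ (h, k) with hM₂
  have key : ptraceFirstOuter φ₁ = ptraceFirstOuter φ₂ := h₁.trans h₂.symm
  have hgram : M₁ * M₁ᴴ = M₂ * M₂ᴴ := by
    ext k k'
    have := congrFun (congrFun (congrArg (fun M => (M : Matrix K K ℂ)) key) k) k'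
    simpa [ptraceFirstOuter, Matrix.mul_apply, Matrix.conjTranspose_apply, hM₁, hM₂]
      using this
  obtain ⟨W, hW, hBW⟩ := exists_unitary_of_gram_eq M₁ M₂ hgram
  refine ⟨Wᵀ, ?_, ?_⟩
  · rw [Matrix.mem_unitaryGroup_iff]
    have h1 : star W * W = 1 := hW.1
    calc Wᵀ * star Wᵀ = (star W * W)ᵀ := by
          rw [Matrix.star_eq_conjTranspose, Matrix.star_eq_conjTranspose,
            Matrix.transpose_mul]
          congr 1
      _ = 1 := by rw [h1, Matrix.transpose_one]
  · funext p
    obtain ⟨h, k⟩ := p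
    have hφ₂ : φ₂ (h, k) = (M₁ * W) k h := by rw [← hBW]; rfl
    show _ = φ₂ (h, k)
    rw [hφ₂]
    simp only [Matrix.mulVec, dotProduct, Fintype.sum_prod_type,
      Matrix.kroneckerMap_apply, Matrix.one_apply, Matrix.transpose_apply,
      Matrix.mul_apply, mul_ite, mul_one, mul_zero, ite_mul, zero_mul,
      Finset.sum_ite_eq, Finset.mem_univ, if_true]
    exact Finset.sum_congr rfl fun h' _ => mul_comm _ _
end
end
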